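/- Let E be a full heap over A, where P is finite, let q in P, and let F, F' be proper ideals of E with chi(F, F') = e_q or chi(F, F') = -e_q. Then for every p in P, chi(S_p(F), S_p(F')) = s_p(chi(F, F')), where s_p acts on Z^P via the reflection representation. -/

import Mathlib

/-- Two vertices of the Dynkin diagram are adjacent if they are distinct
and the corresponding entry of the generalized Cartan matrix is nonzero. -/
def Adj {P : Type*} (A : P → P → ℤ) (p q : P) : Prop := p ≠ q ∧ A p q ≠ 0

/-- A generalized Cartan matrix with all entries in {2, 0, -1, -2}. -/
def IsGCM {P : Type*} (A : P → P → ℤ) : Prop :=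
  (∀ p, A p p = 2) ∧ (∀ p q, p ≠ q → A p q ≤ 0) ∧
  (∀ p q, (A p q = 0 ↔ A q p = 0)) ∧
  (∀ p q, A p q = 2 ∨ A p q = 0 ∨ A p q = -1 ∨ A p q = -2)

/-- An ideal (downward-closed subset) of a partially ordered set. -/
def IsIdeal {E : Type*} [PartialOrder E] (F : Set E) : Prop :=
  ∀ ⦃x : E⦄, x ∈ F → ∀ ⦃y : E⦄, y ≤ x → y ∈ F

/-- A proper ideal: an ideal meeting each fibre `eps ⁻¹ {p}` in a nonempty
proper subset. -/
def IsProperIdeal {P E : Type*} [PartialOrder E] (eps : E → P) (F : Set E) : Prop :=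
  IsIdeal F ∧ ∀ p : P, (∃ a, eps a = p ∧ a ∈ F) ∧ (∃ a, eps a = p ∧ a ∉ F)

/-- A full heap over the generalized Cartan matrix `A` with labelling map `eps`.
Local finiteness is expressed by the `LocallyFiniteOrder` instance. -/
structure IsFullHeap {P E : Type*} [PartialOrder E] [LocallyFiniteOrder E]
    (A : P → P → ℤ) (eps : E → P) : Prop where
  /-- elements with equal or adjacent labels are comparable -/
  comparable : ∀ a b : E, (eps a = eps b ∨ Adj A (eps a) (eps b)) → a ≤ b ∨ b ≤ a
  /-- the order is the reflexive-transitive closure of its restriction to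
  pairs with equal or adjacent labels -/
  le_generated : ∀ a b : E, a ≤ b ↔
    Relation.ReflTransGen (fun x y : E => x ≤ y ∧ (eps x = eps y ∨ Adj A (eps x) (eps y))) a b
  /-- each fibre is unbounded above in E -/
  unbounded_above : ∀ (p : P) (a : E), ∃ b, eps b = p ∧ ¬ b ≤ a
  /-- each fibre is unbounded below in E -/
  unbounded_below : ∀ (p : P) (a : E), ∃ b, eps b = p ∧ ¬ a ≤ b
  /-- covering elements with adjacent labels exist -/
  covers : ∀ p p' : P, Adj A p p' → ∀ a : E, eps a = p →
    ∃ b, eps b = p' ∧ (a ⋖ b ∨ b ⋖ a)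
  /-- the defining condition on open intervals between consecutive elements
  of a fibre -/
  interval : ∀ a b : E, a < b → eps a = eps b →
    (∀ c, a < c → c < b → eps c ≠ eps a) →
    (∑ c ∈ Finset.Ioo a b, A (eps a) (eps c)) = -2

/-- The character of a pair of proper ideals:
`chi(F, F')(p) = |(F' \ F) ∩ eps⁻¹(p)| - |(F \ F') ∩ eps⁻¹(p)|`. -/
noncomputable def chiFn {P E : Type*} (eps : E → P) (F F' : Set E) : P → ℤ :=
  fun p => (((F' \ F) ∩ eps ⁻¹' {p}).ncard : ℤ) - (((F \ F') ∩ eps ⁻¹' {p}).ncard : ℤ)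

open Classical in
/-- The operator `S_p` on ideals: remove the (unique) element of label `p`
that can be removed, else add the (unique) element of label `p` that can be
added, else do nothing. -/
noncomputable def Sact {P E : Type*} [PartialOrder E] (eps : E → P) (p : P) (I : Set E) :
    Set E :=
  if h : ∃ a, a ∈ I ∧ eps a = p ∧ IsIdeal (I \ {a}) then I \ {h.choose}
  else if h' : ∃ a, a ∉ I ∧ eps a = p ∧ IsIdeal (I ∪ {a}) then I ∪ {h'.choose}
  else I

/-- The defining relations of the Weyl group of a (doubly laced)
generalized Cartan matrix. -/
def weylRels {P : Type*} (A : P → P → ℤ) : Set (FreeGroup P) :=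
  {r | (∃ p, r = FreeGroup.of p ^ 2) ∨
       (∃ p q, A p q = 0 ∧ r = (FreeGroup.of p * FreeGroup.of q) ^ 2) ∨
       (∃ p q, A p q * A q p = 1 ∧ r = (FreeGroup.of p * FreeGroup.of q) ^ 3) ∨
       (∃ p q, A p q * A q p = 2 ∧ r = (FreeGroup.of p * FreeGroup.of q) ^ 4)}

/-- The Weyl group of a generalized Cartan matrix, as a presented group. -/
abbrev WeylGroup {P : Type*} (A : P → P → ℤ) := PresentedGroup (weylRels A)

/-- The reflection `s_p` in the reflection representation on `ℤ^P`:
`s_p(v) = v - (∑ q, a_{pq} v_q) e_p`. -/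
def reflAct {P : Type*} [Fintype P] [DecidableEq P] (A : P → P → ℤ) (p : P) (v : P → ℤ) :
    P → ℤ :=
  fun r => if r = p then v p - ∑ q, A p q * v q else v r

/-- `A` is of affine type: indecomposable, and `A δ = 0` for some positive
integer vector `δ`. -/
def IsAffine {P : Type*} [Fintype P] (A : P → P → ℤ) : Prop :=
  (∀ p q : P, Relation.ReflTransGen (Adj A) p q) ∧
  ∃ δ : P → ℤ, (∀ p, 0 < δ p) ∧ ∀ p, (∑ q, A p q * δ q) = 0

/-!
Fibres of a full heap are chains, so `chi(F, F') = e_q` forces `F' = F ∪ {α}` with `α` a minimal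
element of `E \ F` of label `q`; the case `-e_q` is the same with `F` and `F'` exchanged. Two
consecutive elements of a fibre never form a covering pair (the sum over the empty interval between
them would be `0`, not `-2`), while a maximal element of an ideal lying below a minimal element of
its complement is covered by it.

For `p = q` this shows that `S_q` adds `α` to `F` and removes it from `F'`. For `p` not adjacent
to `q` no element of label `p` covers or is covered by `α`, so `S_p` treats `F` and `F'` alike.
For `p` adjacent to `q`, let `β < α < γ` be the neighbours of `α` in the fibre of `p`: `S_p` can
only remove `β` from `F` and add `γ` to `F'`. Each of these moves is blocked exactly when an
element of `(β, γ) \ {α}` with nonzero weight `a_{p,·}` lies on the wrong side, and the interval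
condition `a_{pq} + ∑_{(β, γ) \ {α}} a_{p,·} = -2` leaves room for exactly `-a_{pq}` moves.
-/

section Ideals

variable {E : Type*} [PartialOrder E] {I : Set E} {a : E}

theorem isIdeal_diff_singleton_iff (hI : IsIdeal I) : IsIdeal (I \ {a}) ↔ ∀ x ∈ I, ¬ a < x := by
  refine ⟨fun h x hx hax => (h ⟨hx, hax.ne'⟩ hax.le).2 rfl, fun h x hx y hyx => ⟨hI hx.1 hyx, ?_⟩⟩
  rintro rfl
  exact h x hx.1 (hyx.lt_of_ne (Ne.symm hx.2))

theorem isIdeal_union_singleton_iff (hI : IsIdeal I) : IsIdeal (I ∪ {a}) ↔ ∀ y < a, y ∈ I := by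
  refine ⟨fun h y hy => (h (Or.inr rfl) hy.le).resolve_right hy.ne, fun h x hx y hyx => ?_⟩
  rcases hx with hx | rfl
  · exact Or.inl (hI hx hyx)
  · exact (eq_or_lt_of_le hyx).symm.imp (h y) id

theorem IsIdeal.not_lt_of_mem_union_singleton (hI : IsIdeal I) (ha : a ∉ I) :
    ∀ x ∈ I ∪ {a}, ¬ a < x := by
  rintro x (hx | rfl) hax
  · exact ha (hI hx hax.le)
  · exact hax.false

theorem covBy_of_maximal_of_minimal {b : E} (hb : ∀ x ∈ I, ¬ b < x) (ha : ∀ y < a, y ∈ I)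
    (hba : b < a) : b ⋖ a :=
  ⟨hba, fun c hbc hca => hb c (ha c hca) hbc⟩

theorem forall_not_lt_union_singleton_iff {b : E} (ha : ∀ y < a, y ∈ I) (hba : ¬ b ⋖ a) :
    (∀ x ∈ I ∪ {a}, ¬ b < x) ↔ ∀ x ∈ I, ¬ b < x := by
  refine ⟨fun h x hx => h x (Or.inl hx), fun h => ?_⟩
  rintro x (hx | rfl) hbx
  · exact h x hx hbx
  · exact hba (covBy_of_maximal_of_minimal h ha hbx)

theorem forall_lt_mem_union_singleton_iff {b : E} (hI : IsIdeal I) (ha : a ∉ I) (hab : ¬ a ⋖ b) :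
    (∀ y < b, y ∈ I ∪ {a}) ↔ ∀ y < b, y ∈ I := by
  refine ⟨fun h y hy => (h y hy).resolve_right ?_, fun h y hy => Or.inl (h y hy)⟩
  rintro rfl
  exact hab (covBy_of_maximal_of_minimal (hI.not_lt_of_mem_union_singleton ha) h hy)

theorem Finset.Ioo_eq_singleton_of_maximal_of_minimal [LocallyFiniteOrder E] {b c : E}
    (hb : ∀ x ∈ I, ¬ b < x) (hc : ∀ y < c, y ∈ I ∪ {a}) (hba : b < a) (hac : a < c) :
    Finset.Ioo b c = {a} := by
  refine Finset.eq_singleton_iff_unique_mem.2 ⟨Finset.mem_Ioo.2 ⟨hba, hac⟩, fun x hx => ?_⟩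
  obtain ⟨hbx, hxc⟩ := Finset.mem_Ioo.1 hx
  exact (hc x hxc).resolve_left fun hxI => hb x hxI hbx

end Ideals

theorem Finset.exists_forall_le_of_total {α : Type*} [PartialOrder α] {s : Finset α}
    (hs : s.Nonempty) (htot : ∀ x ∈ s, ∀ y ∈ s, x ≤ y ∨ y ≤ x) : ∃ m ∈ s, ∀ x ∈ s, x ≤ m := by
  obtain ⟨m, hm⟩ := s.exists_maximal hs
  exact ⟨m, hm.prop, fun x hx => (htot x hx m hm.prop).elim id (hm.le_of_ge hx)⟩

theorem Finset.exists_forall_ge_of_total {α : Type*} [PartialOrder α] {s : Finset α}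
    (hs : s.Nonempty) (htot : ∀ x ∈ s, ∀ y ∈ s, x ≤ y ∨ y ≤ x) : ∃ m ∈ s, ∀ x ∈ s, m ≤ x := by
  obtain ⟨m, hm⟩ := s.exists_minimal hs
  exact ⟨m, hm.prop, fun x hx => (htot x hx m hm.prop).elim (hm.le_of_le hx) id⟩

theorem Adj.symm {P : Type*} {A : P → P → ℤ} (hA : IsGCM A) {p q : P} (h : Adj A p q) :
    Adj A q p :=
  ⟨h.1.symm, fun h0 => h.2 ((hA.2.2.1 p q).2 h0)⟩

namespace IsFullHeap

variable {P E : Type*} [PartialOrder E] [LocallyFiniteOrder E] {A : P → P → ℤ} {eps : E → P}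
  {a b : E}

theorem le_total_of_eps_eq (hE : IsFullHeap A eps) (h : eps a = eps b) : a ≤ b ∨ b ≤ a :=
  hE.comparable a b (Or.inl h)

theorem eq_of_eps_eq (hE : IsFullHeap A eps) (h : eps a = eps b) (hab : ¬ a < b)
    (hba : ¬ b < a) : a = b :=
  (hE.le_total_of_eps_eq h).elim (fun h' => h'.eq_or_lt.resolve_right hab)
    (fun h' => (h'.eq_or_lt.resolve_right hba).symm)

theorem lt_or_lt_of_adj (hE : IsFullHeap A eps) (h : Adj A (eps a) (eps b)) : a < b ∨ b < a := by
  have hne : a ≠ b := fun hab => h.1 (congrArg eps hab)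
  exact (hE.comparable a b (Or.inr h)).imp (lt_of_le_of_ne · hne) (lt_of_le_of_ne · hne.symm)

theorem eps_eq_or_adj_of_covBy (hE : IsFullHeap A eps) (hab : a ⋖ b) :
    eps a = eps b ∨ Adj A (eps a) (eps b) := by
  have hgen := (hE.le_generated a b).1 hab.le
  revert hab
  induction hgen using Relation.ReflTransGen.head_induction_on with
  | refl => exact fun hab => absurd rfl hab.ne
  | head hac hcb ih =>
    intro hab
    rcases hac.1.eq_or_lt with rfl | hlt
    · exact ih hab
    · obtain rfl : _ = b := ((hE.le_generated _ _).2 hcb).eq_of_not_lt (hab.2 hlt)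
      exact hac.2

theorem not_covBy_of_not_adj (hA : IsGCM A) (hE : IsFullHeap A eps) (hab : eps a ≠ eps b)
    (hA0 : A (eps a) (eps b) = 0) : ¬ a ⋖ b ∧ ¬ b ⋖ a := by
  have hnadj : ¬ Adj A (eps a) (eps b) := fun h => h.2 hA0
  refine ⟨fun h => ?_, fun h => ?_⟩
  · exact (hE.eps_eq_or_adj_of_covBy h).elim hab hnadj
  · exact (hE.eps_eq_or_adj_of_covBy h).elim (fun h' => hab h'.symm) fun h' => hnadj (h'.symm hA)

theorem not_covBy_of_eps_eq (hE : IsFullHeap A eps) (h : eps a = eps b) : ¬ a ⋖ b := by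
  intro hab
  have hsum := hE.interval a b hab.lt h fun c hac hcb => absurd hcb (hab.2 hac)
  have hempty : Finset.Ioo a b = ∅ := Finset.eq_empty_of_forall_notMem fun c hc =>
    hab.2 (Finset.mem_Ioo.1 hc).1 (Finset.mem_Ioo.1 hc).2
  rw [hempty, Finset.sum_empty] at hsum
  exact absurd hsum (by norm_num)

variable {p : P} {α : E}

theorem exists_lt_forall_le (hE : IsFullHeap A eps) (hadj : Adj A p (eps α)) :
    ∃ β, eps β = p ∧ β < α ∧ ∀ x, eps x = p → x < α → x ≤ β := by
  classical
  obtain ⟨b, hbp, hb⟩ := hE.unbounded_below p α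
  have hbα : b < α := (hE.lt_or_lt_of_adj (hbp ▸ hadj)).resolve_right fun h => hb h.le
  obtain ⟨β, hβs, hβmax⟩ := ((Finset.Icc b α).filter (eps · = p)).exists_forall_le_of_total
    ⟨b, by simp [hbα.le, hbp]⟩ fun x hx y hy => hE.le_total_of_eps_eq (by simp_all)
  simp only [Finset.mem_filter, Finset.mem_Icc] at hβs hβmax
  refine ⟨β, hβs.2, hβs.1.2.lt_of_ne fun h => hadj.1 (h ▸ hβs.2.symm), fun x hx hxα => ?_⟩
  rcases hE.le_total_of_eps_eq (hx.trans hbp.symm) with h | h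
  · exact h.trans hβs.1.1
  · exact hβmax x ⟨⟨h, hxα.le⟩, hx⟩

theorem exists_gt_forall_ge (hE : IsFullHeap A eps) (hadj : Adj A p (eps α)) :
    ∃ γ, eps γ = p ∧ α < γ ∧ ∀ x, eps x = p → α < x → γ ≤ x := by
  classical
  obtain ⟨b, hbp, hb⟩ := hE.unbounded_above p α
  have hαb : α < b := (hE.lt_or_lt_of_adj (hbp ▸ hadj)).resolve_left fun h => hb h.le
  obtain ⟨γ, hγs, hγmin⟩ := ((Finset.Icc α b).filter (eps · = p)).exists_forall_ge_of_total
    ⟨b, by simp [hαb.le, hbp]⟩ fun x hx y hy => hE.le_total_of_eps_eq (by simp_all)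
  simp only [Finset.mem_filter, Finset.mem_Icc] at hγs hγmin
  refine ⟨γ, hγs.2, hγs.1.1.lt_of_ne fun h => hadj.1 (h ▸ hγs.2.symm), fun x hx hαx => ?_⟩
  rcases hE.le_total_of_eps_eq (hx.trans hbp.symm) with h | h
  · exact hγmin x ⟨⟨hαx.le, h⟩, hx⟩
  · exact hγs.1.2.trans h

end IsFullHeap

structure IsConsecutive {P E : Type*} [PartialOrder E] (eps : E → P) (p : P) (β γ : E) :
    Prop where
  eps_left : eps β = p
  eps_right : eps γ = p
  lt : β < γ
  le_or_le : ∀ x, eps x = p → x ≤ β ∨ γ ≤ x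

namespace IsConsecutive

variable {P E : Type*} [PartialOrder E] {A : P → P → ℤ} {eps : E → P} {p : P} {β γ c : E}

theorem eps_ne (h : IsConsecutive eps p β γ) (hβc : β < c) (hcγ : c < γ) : eps c ≠ p :=
  fun hc => (h.le_or_le c hc).elim (fun h' => hβc.not_ge h') (fun h' => hcγ.not_ge h')

theorem A_nonpos (hA : IsGCM A) (h : IsConsecutive eps p β γ) (hβc : β < c) (hcγ : c < γ) :
    A p (eps c) ≤ 0 :=
  hA.2.1 p _ (h.eps_ne hβc hcγ).symm

variable [LocallyFiniteOrder E]

theorem exists_of_adj (hE : IsFullHeap A eps) {α : E} (hadj : Adj A p (eps α)) :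
    ∃ β γ, IsConsecutive eps p β γ ∧ β < α ∧ α < γ := by
  obtain ⟨β, hβp, hβα, hβ⟩ := hE.exists_lt_forall_le hadj
  obtain ⟨γ, hγp, hαγ, hγ⟩ := hE.exists_gt_forall_ge hadj
  refine ⟨β, γ, ⟨hβp, hγp, hβα.trans hαγ, fun x hx => ?_⟩, hβα, hαγ⟩
  exact (hE.lt_or_lt_of_adj (hx ▸ hadj)).imp (hβ x hx) (hγ x hx)

theorem sum_Ioo (hE : IsFullHeap A eps) (h : IsConsecutive eps p β γ) :
    ∑ c ∈ Finset.Ioo β γ, A p (eps c) = -2 := by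
  have := hE.interval β γ h.lt (h.eps_left.trans h.eps_right.symm)
    fun c hβc hcγ => h.eps_left ▸ h.eps_ne hβc hcγ
  rwa [h.eps_left] at this

theorem sum_erase_neg [DecidableEq E] (hE : IsFullHeap A eps) (h : IsConsecutive eps p β γ) {α : E}
    (hβα : β < α) (hαγ : α < γ) :
    ∑ c ∈ (Finset.Ioo β γ).erase α, -A p (eps c) = 2 + A p (eps α) := by
  have := Finset.add_sum_erase _ (fun c => A p (eps c)) (Finset.mem_Ioo.2 ⟨hβα, hαγ⟩)
  rw [h.sum_Ioo hE] at this
  rw [Finset.sum_neg_distrib]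
  linarith

theorem lt_right_of_covBy (hA : IsGCM A) (hE : IsFullHeap A eps) (h : IsConsecutive eps p β γ)
    (hβc : β ⋖ c) (hγc : ¬ γ ≤ c) : c < γ ∧ A p (eps c) ≠ 0 := by
  have hadj : Adj A p (eps c) := by
    refine h.eps_left ▸ (hE.eps_eq_or_adj_of_covBy hβc).resolve_left fun hc => ?_
    exact (h.le_or_le c (hc ▸ h.eps_left)).elim hβc.lt.not_ge hγc
  exact ⟨(hE.lt_or_lt_of_adj (h.eps_right ▸ hadj.symm hA)).resolve_right
    fun h' => hγc h'.le, hadj.2⟩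

theorem left_lt_of_covBy (hA : IsGCM A) (hE : IsFullHeap A eps) (h : IsConsecutive eps p β γ)
    (hcγ : c ⋖ γ) (hcβ : ¬ c ≤ β) : β < c ∧ A p (eps c) ≠ 0 := by
  have hadj : Adj A (eps c) p := by
    refine h.eps_right ▸ (hE.eps_eq_or_adj_of_covBy hcγ).resolve_left fun hc => ?_
    exact (h.le_or_le c (hc.trans h.eps_right)).elim hcβ hcγ.lt.not_ge
  exact ⟨(hE.lt_or_lt_of_adj (h.eps_left ▸ hadj.symm hA)).resolve_right
    fun h' => hcβ h'.le, (hadj.symm hA).2⟩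

theorem exists_mem_of_lt (hA : IsGCM A) (hE : IsFullHeap A eps) (h : IsConsecutive eps p β γ)
    {F : Set E} (hF : IsIdeal F) (hγF : γ ∉ F) {x : E} (hxF : x ∈ F) (hβx : β < x) :
    ∃ c ∈ F, β < c ∧ c < γ ∧ A p (eps c) ≠ 0 := by
  obtain ⟨c, hβc, hcx⟩ := exists_covBy_le_of_lt hβx
  have hcF : c ∈ F := hF hxF hcx
  obtain ⟨hcγ, hc⟩ := h.lt_right_of_covBy hA hE hβc fun hγc => hγF (hF hcF hγc)
  exact ⟨c, hcF, hβc.lt, hcγ, hc⟩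

theorem exists_notMem_of_lt (hA : IsGCM A) (hE : IsFullHeap A eps) (h : IsConsecutive eps p β γ)
    {F : Set E} (hF : IsIdeal F) (hβF : β ∈ F) {y : E} (hyF : y ∉ F) (hyγ : y < γ) :
    ∃ d ∉ F, β < d ∧ d < γ ∧ A p (eps d) ≠ 0 := by
  obtain ⟨d, hyd, hdγ⟩ := exists_le_covBy_of_lt hyγ
  have hdF : d ∉ F := fun hd => hyF (hF hd hyd)
  obtain ⟨hβd, hd⟩ := h.left_lt_of_covBy hA hE hdγ fun hdβ => hdF (hF hβF hdβ)
  exact ⟨d, hdF, hβd, hdγ.lt, hd⟩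

end IsConsecutive

section Sact

variable {P E : Type*} [PartialOrder E] {A : P → P → ℤ} {eps : E → P} {p : P} {I : Set E}
  {a : E}

theorem mem_Sact_iff_of_eps_ne (h : eps a ≠ p) : a ∈ Sact eps p I ↔ a ∈ I := by
  unfold Sact
  split_ifs with hrem hadd
  · exact ⟨fun ha => ha.1, fun ha => ⟨ha, fun he => h (he ▸ hrem.choose_spec.2.1)⟩⟩
  · exact ⟨fun ha => ha.resolve_right fun he => h (he ▸ hadd.choose_spec.2.1), Or.inl⟩
  · rfl

open Classical in
theorem Sact_of_not_exists_maximal (hI : IsIdeal I)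
    (hno : ¬ ∃ b ∈ I, eps b = p ∧ ∀ x ∈ I, ¬ b < x) :
    Sact eps p I =
      if h : ∃ b, b ∉ I ∧ eps b = p ∧ IsIdeal (I ∪ {b}) then I ∪ {h.choose} else I := by
  have hrem : ¬ ∃ b, b ∈ I ∧ eps b = p ∧ IsIdeal (I \ {b}) := fun ⟨b, hb, hbp, hbI⟩ =>
    hno ⟨b, hb, hbp, (isIdeal_diff_singleton_iff hI).1 hbI⟩
  rw [Sact, dif_neg hrem]

theorem Sact_eq_self (hI : IsIdeal I) (hno_rem : ¬ ∃ b ∈ I, eps b = p ∧ ∀ x ∈ I, ¬ b < x)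
    (hno_add : ¬ ∃ b ∉ I, eps b = p ∧ ∀ y < b, y ∈ I) : Sact eps p I = I := by
  rw [Sact_of_not_exists_maximal hI hno_rem, dif_neg]
  exact fun ⟨b, hb, hbp, hbI⟩ => hno_add ⟨b, hb, hbp, (isIdeal_union_singleton_iff hI).1 hbI⟩

variable [LocallyFiniteOrder E]

theorem Sact_eq_diff (hE : IsFullHeap A eps) (hI : IsIdeal I) (ha : a ∈ I) (hap : eps a = p)
    (hmax : ∀ x ∈ I, ¬ a < x) : Sact eps p I = I \ {a} := by
  have hex : ∃ b, b ∈ I ∧ eps b = p ∧ IsIdeal (I \ {b}) :=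
    ⟨a, ha, hap, (isIdeal_diff_singleton_iff hI).2 hmax⟩
  obtain ⟨hb, hbp, hbI⟩ := hex.choose_spec
  rw [Sact, dif_pos hex, hE.eq_of_eps_eq (hbp.trans hap.symm)
    ((isIdeal_diff_singleton_iff hI).1 hbI a ha) (hmax _ hb)]

theorem Sact_eq_union (hE : IsFullHeap A eps) (hI : IsIdeal I)
    (hno : ¬ ∃ b ∈ I, eps b = p ∧ ∀ x ∈ I, ¬ b < x) (ha : a ∉ I) (hap : eps a = p)
    (hmin : ∀ y < a, y ∈ I) : Sact eps p I = I ∪ {a} := by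
  have hex : ∃ b, b ∉ I ∧ eps b = p ∧ IsIdeal (I ∪ {b}) :=
    ⟨a, ha, hap, (isIdeal_union_singleton_iff hI).2 hmin⟩
  obtain ⟨hb, hbp, hbI⟩ := hex.choose_spec
  have hbmin := (isIdeal_union_singleton_iff hI).1 hbI
  rw [Sact_of_not_exists_maximal hI hno, dif_pos hex, hE.eq_of_eps_eq (hbp.trans hap.symm)
    (fun h => hb (hmin _ h)) (fun h => ha (hbmin a h))]

end Sact

section Character

variable {P E : Type*} {eps : E → P}

theorem chiFn_swap (F F' : Set E) : chiFn eps F' F = -chiFn eps F F' := by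
  funext r
  simp only [chiFn, Pi.neg_apply]
  ring

theorem chiFn_union_finset [DecidableEq P] {G : Set E} {D : Finset E} (hD : ∀ x ∈ D, x ∉ G) :
    chiFn eps G (G ∪ ↑D) = ∑ x ∈ D, Pi.single (eps x) 1 := by
  classical
  funext r
  have hnew : ((G ∪ ↑D) \ G) ∩ eps ⁻¹' {r} = ↑(D.filter (eps · = r)) := by
    ext x
    simp only [Set.mem_inter_iff, Set.mem_sdiff, Set.mem_union, Finset.mem_coe, Set.mem_preimage,
      Set.mem_singleton_iff, Finset.coe_filter, Set.mem_ofPred_eq]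
    exact ⟨fun ⟨⟨hx, hxG⟩, hxr⟩ => ⟨hx.resolve_left hxG, hxr⟩,
      fun ⟨hx, hxr⟩ => ⟨⟨Or.inr hx, hD x hx⟩, hxr⟩⟩
  rw [chiFn, hnew, Set.sdiff_eq_empty.2 Set.subset_union_left, Set.empty_inter, Set.ncard_empty,
    Set.ncard_coe_finset, Finset.sum_apply]
  simp [Pi.single_apply, eq_comm]

theorem chiFn_union_singleton [DecidableEq P] {G : Set E} {a : E} (ha : a ∉ G) :
    chiFn eps G (G ∪ {a}) = Pi.single (eps a) 1 := by
  simpa using chiFn_union_finset (eps := eps) (D := {a}) (by simpa using ha)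

variable [PartialOrder E] [LocallyFiniteOrder E] {A : P → P → ℤ} {F F' : Set E}

theorem IsFullHeap.finite_diff_inter_fibre (hE : IsFullHeap A eps) (hF : IsProperIdeal eps F)
    (hF' : IsProperIdeal eps F') (r : P) : ((F \ F') ∩ eps ⁻¹' {r}).Finite := by
  obtain ⟨a, har, haF'⟩ := (hF'.2 r).1
  obtain ⟨b, hbr, hbF⟩ := (hF.2 r).2
  refine (Set.finite_Icc a b).subset fun x ⟨⟨hxF, hxF'⟩, hxr⟩ => ⟨?_, ?_⟩
  · exact (hE.le_total_of_eps_eq (har.trans hxr.symm)).resolve_right fun h => hxF' (hF'.1 haF' h)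
  · exact (hE.le_total_of_eps_eq (hxr.trans hbr.symm)).resolve_right fun h => hbF (hF.1 hxF h)

theorem IsFullHeap.diff_inter_fibre_eq_empty (hE : IsFullHeap A eps) (hF : IsIdeal F)
    (hF' : IsIdeal F') {x : E} (hx : x ∈ F \ F') : (F' \ F) ∩ eps ⁻¹' {eps x} = ∅ := by
  refine Set.eq_empty_of_forall_notMem fun y ⟨⟨hyF', hyF⟩, hy⟩ => ?_
  rcases hE.le_total_of_eps_eq hy with h | h
  · exact hyF (hF hx.1 h)
  · exact hx.2 (hF' hyF' h)

theorem IsFullHeap.subset_of_chiFn_nonneg (hE : IsFullHeap A eps) (hF : IsProperIdeal eps F)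
    (hF' : IsProperIdeal eps F') (h : ∀ r, 0 ≤ chiFn eps F F' r) : F ⊆ F' := by
  intro x hxF
  by_contra hxF'
  have hpos := (Set.ncard_pos (hE.finite_diff_inter_fibre hF hF' (eps x))).2
    ⟨x, ⟨hxF, hxF'⟩, rfl⟩
  have hx := h (eps x)
  rw [chiFn, hE.diff_inter_fibre_eq_empty hF.1 hF'.1 ⟨hxF, hxF'⟩, Set.ncard_empty] at hx
  omega

theorem IsFullHeap.exists_eq_union_singleton [DecidableEq P] (hE : IsFullHeap A eps)
    (hF : IsProperIdeal eps F) (hF' : IsProperIdeal eps F') {q : P}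
    (h : chiFn eps F F' = Pi.single q 1) : ∃ α, α ∉ F ∧ eps α = q ∧ F' = F ∪ {α} := by
  have hsub : F ⊆ F' := hE.subset_of_chiFn_nonneg hF hF' fun r => by
    rw [h, Pi.single_apply]
    split_ifs <;> norm_num
  have hcard (r : P) : (((F' \ F) ∩ eps ⁻¹' {r}).ncard : ℤ) = (Pi.single q 1 : P → ℤ) r := by
    rw [← h, chiFn, Set.sdiff_eq_empty.2 hsub, Set.empty_inter, Set.ncard_empty, Nat.cast_zero,
      sub_zero]
  have hq := hcard q
  rw [Pi.single_eq_same] at hq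
  obtain ⟨α, hα⟩ := Set.ncard_eq_one.1 (by exact_mod_cast hq)
  have hdiff : F' \ F ⊆ {α} := by
    intro x hx
    by_cases hxq : eps x = q
    · exact hα ▸ ⟨hx, hxq⟩
    · have hpos := (Set.ncard_pos (hE.finite_diff_inter_fibre hF' hF (eps x))).2 ⟨x, hx, rfl⟩
      have := hcard (eps x)
      rw [Pi.single_eq_of_ne hxq] at this
      omega
  have hαmem : α ∈ (F' \ F) ∩ eps ⁻¹' {q} := hα ▸ rfl
  refine ⟨α, hαmem.1.2, hαmem.2, ?_⟩
  rw [← Set.union_sdiff_cancel hsub, Set.Subset.antisymm hdiff (by simpa using hαmem.1)]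

end Character

section Reflection

variable {P : Type*} [Fintype P] [DecidableEq P] (A : P → P → ℤ) (p : P)

theorem reflAct_neg (v : P → ℤ) : reflAct A p (-v) = -reflAct A p v := by
  funext r
  simp only [reflAct, Pi.neg_apply, mul_neg, Finset.sum_neg_distrib]
  split_ifs <;> ring

theorem reflAct_single (q : P) :
    reflAct A p (Pi.single q 1) = Pi.single q 1 - Pi.single p (A p q) := by
  funext r
  simp only [reflAct, Pi.sub_apply, Pi.single_apply, mul_ite, mul_one, mul_zero,
    Finset.sum_ite_eq']
  split_ifs <;> simp_all

end Reflection

section UnionSingleton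

variable {P E : Type*} [PartialOrder E] [LocallyFiniteOrder E]
  {A : P → P → ℤ} {eps : E → P} {F : Set E} {α : E}

theorem Sact_union_singleton_of_forall_not_covBy (hE : IsFullHeap A eps) (hF : IsIdeal F)
    (hαF : α ∉ F) (hαmin : ∀ y < α, y ∈ F) {p : P} (hpα : p ≠ eps α)
    (hcov : ∀ δ, eps δ = p → ¬ δ ⋖ α ∧ ¬ α ⋖ δ) :
    Sact eps p (F ∪ {α}) = Sact eps p F ∪ {α} := by
  have hF' : IsIdeal (F ∪ {α}) := (isIdeal_union_singleton_iff hF).2 hαmin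
  have hmem (δ : E) (hδ : eps δ = p) : δ ∈ F ∪ {α} ↔ δ ∈ F :=
    ⟨fun h => h.resolve_right fun he => hpα (hδ ▸ congrArg eps he), Or.inl⟩
  have hmax (δ : E) (hδ : eps δ = p) := forall_not_lt_union_singleton_iff hαmin (hcov δ hδ).1
  have hmin (δ : E) (hδ : eps δ = p) := forall_lt_mem_union_singleton_iff hF hαF (hcov δ hδ).2
  by_cases hrem : ∃ b ∈ F, eps b = p ∧ ∀ x ∈ F, ¬ b < x
  · obtain ⟨δ, hδ, hδp, hδmax⟩ := hrem
    rw [Sact_eq_diff hE hF' (Or.inl hδ) hδp ((hmax δ hδp).2 hδmax), Sact_eq_diff hE hF hδ hδp hδmax,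
      Set.union_sdiff_distrib, Set.sdiff_singleton_eq_self (s := {α})
      fun h => hpα (Set.mem_singleton_iff.1 h ▸ hδp).symm]
  have hrem' : ¬ ∃ b ∈ F ∪ {α}, eps b = p ∧ ∀ x ∈ F ∪ {α}, ¬ b < x :=
    fun ⟨b, hb, hbp, hbmax⟩ => hrem ⟨b, (hmem b hbp).1 hb, hbp, (hmax b hbp).1 hbmax⟩
  by_cases hadd : ∃ b ∉ F, eps b = p ∧ ∀ y < b, y ∈ F
  · obtain ⟨δ, hδ, hδp, hδmin⟩ := hadd
    rw [Sact_eq_union hE hF' hrem' (fun h => hδ ((hmem δ hδp).1 h)) hδp ((hmin δ hδp).2 hδmin),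
      Sact_eq_union hE hF hrem hδ hδp hδmin, Set.union_right_comm]
  have hadd' : ¬ ∃ b ∉ F ∪ {α}, eps b = p ∧ ∀ y < b, y ∈ F ∪ {α} :=
    fun ⟨b, hb, hbp, hbmin⟩ => hadd ⟨b, fun h => hb ((hmem b hbp).2 h), hbp, (hmin b hbp).1 hbmin⟩
  rw [Sact_eq_self hF' hrem' hadd', Sact_eq_self hF hrem hadd]

open Classical in
theorem Sact_eq_ite_of_isConsecutive_left (hE : IsFullHeap A eps) (hF : IsIdeal F) {p : P}
    {β γ : E} (h : IsConsecutive eps p β γ) (hβF : β ∈ F) (hαF : α ∉ F) (hαγ : α < γ) :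
    Sact eps p F = if ∀ x ∈ F, ¬ β < x then F \ {β} else F := by
  have hγF : γ ∉ F := fun hγ => hαF (hF hγ hαγ.le)
  split_ifs with hβmax
  · exact Sact_eq_diff hE hF hβF h.eps_left hβmax
  refine Sact_eq_self hF ?_ ?_
  · rintro ⟨δ, hδF, hδp, hδmax⟩
    rcases h.le_or_le δ hδp with hδβ | hγδ
    · rcases hδβ.eq_or_lt with rfl | hδβ
      · exact hβmax hδmax
      · exact hδmax β hβF hδβ
    · exact hγF (hF hδF hγδ)
  · rintro ⟨δ, hδF, hδp, hδmin⟩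
    rcases h.le_or_le δ hδp with hδβ | hγδ
    · exact hδF (hF hβF hδβ)
    · exact hαF (hδmin α (hαγ.trans_le hγδ))

open Classical in
theorem Sact_eq_ite_of_isConsecutive_right (hE : IsFullHeap A eps) (hF : IsIdeal F) {p : P}
    {β γ : E} (h : IsConsecutive eps p β γ) (hγF : γ ∉ F) (hαF : α ∈ F) (hβα : β < α) :
    Sact eps p F = if ∀ y < γ, y ∈ F then F ∪ {γ} else F := by
  have hβF : β ∈ F := hF hαF hβα.le
  have hno : ¬ ∃ δ ∈ F, eps δ = p ∧ ∀ x ∈ F, ¬ δ < x := by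
    rintro ⟨δ, hδF, hδp, hδmax⟩
    rcases h.le_or_le δ hδp with hδβ | hγδ
    · exact hδmax α hαF (hδβ.trans_lt hβα)
    · exact hγF (hF hδF hγδ)
  split_ifs with hγmin
  · exact Sact_eq_union hE hF hno hγF h.eps_right hγmin
  refine Sact_eq_self hF hno ?_
  rintro ⟨δ, hδF, hδp, hδmin⟩
  rcases h.le_or_le δ hδp with hδβ | hγδ
  · exact hδF (hF hβF hδβ)
  · rcases hγδ.eq_or_lt with rfl | hγδ
    · exact hγmin hδmin
    · exact hγF (hδmin γ hγδ)

open Classical in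
theorem ite_add_ite_eq_neg_of_isConsecutive (hA : IsGCM A) (hE : IsFullHeap A eps)
    (hF : IsIdeal F) (hαF : α ∉ F) (hαmin : ∀ y < α, y ∈ F) {p : P} (hApα : A p (eps α) ≠ 0)
    {β γ : E} (h : IsConsecutive eps p β γ) (hβα : β < α) (hαγ : α < γ) :
    ((if ∀ x ∈ F, ¬ β < x then 1 else 0) + (if ∀ y < γ, y ∈ F ∪ {α} then 1 else 0) : ℤ) =
      -A p (eps α) := by
  classical
  have hF' : IsIdeal (F ∪ {α}) := (isIdeal_union_singleton_iff hF).2 hαmin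
  have hβF : β ∈ F := hαmin β hβα
  have hγF : γ ∉ F := fun hγ => hαF (hF hγ hαγ.le)
  have hsum := h.sum_erase_neg hE hβα hαγ
  have hW {c : E} (hβc : β < c) (hcγ : c < γ) (hcα : c ≠ α) : c ∈ (Finset.Ioo β γ).erase α :=
    Finset.mem_erase.2 ⟨hcα, Finset.mem_Ioo.2 ⟨hβc, hcγ⟩⟩
  have hnonneg : ∀ c ∈ (Finset.Ioo β γ).erase α, 0 ≤ -A p (eps c) := fun c hc => by
    obtain ⟨hβc, hcγ⟩ := Finset.mem_Ioo.1 (Finset.mem_of_mem_erase hc)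
    exact neg_nonneg.2 (h.A_nonpos hA hβc hcγ)
  have hApα' := h.A_nonpos hA hβα hαγ
  split_ifs with hβmax hγmin hγmin
  · have hsum₂ := h.sum_Ioo hE
    rw [Finset.Ioo_eq_singleton_of_maximal_of_minimal hβmax hγmin hβα hαγ,
      Finset.sum_singleton] at hsum₂
    omega
  · push Not at hγmin
    obtain ⟨y, hyγ, hyF⟩ := hγmin
    obtain ⟨d, hdF, hβd, hdγ, hd⟩ := h.exists_notMem_of_lt hA hE hF' (Or.inl hβF) hyF hyγ
    have hdW := hW hβd hdγ fun hdα => hdF (Or.inr hdα)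
    have := Finset.single_le_sum hnonneg hdW
    have := h.A_nonpos hA hβd hdγ
    omega
  · push Not at hβmax
    obtain ⟨x, hxF, hβx⟩ := hβmax
    obtain ⟨c, hcF, hβc, hcγ, hc⟩ := h.exists_mem_of_lt hA hE hF hγF hxF hβx
    have := Finset.single_le_sum hnonneg (hW hβc hcγ fun hcα => hαF (hcα ▸ hcF))
    have := h.A_nonpos hA hβc hcγ
    omega
  · push Not at hβmax hγmin
    obtain ⟨x, hxF, hβx⟩ := hβmax
    obtain ⟨y, hyγ, hyF⟩ := hγmin
    obtain ⟨c, hcF, hβc, hcγ, hc⟩ := h.exists_mem_of_lt hA hE hF hγF hxF hβx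
    obtain ⟨d, hdF, hβd, hdγ, hd⟩ := h.exists_notMem_of_lt hA hE hF' (Or.inl hβF) hyF hyγ
    have hcdW : {c, d} ⊆ (Finset.Ioo β γ).erase α := Finset.insert_subset
      (hW hβc hcγ fun hcα => hαF (hcα ▸ hcF))
      (Finset.singleton_subset_iff.2 (hW hβd hdγ fun hdα => hdF (Or.inr hdα)))
    have := Finset.sum_le_sum_of_subset_of_nonneg hcdW fun i hi _ => hnonneg i hi
    rw [Finset.sum_pair fun hcd : c = d => hdF (Or.inl (hcd ▸ hcF))] at this
    have := h.A_nonpos hA hβc hcγ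
    have := h.A_nonpos hA hβd hdγ
    omega

variable [DecidableEq P]

theorem chiFn_Sact_union_singleton_self (hA : IsGCM A) (hE : IsFullHeap A eps) (hF : IsIdeal F)
    (hαF : α ∉ F) (hαmin : ∀ y < α, y ∈ F) :
    chiFn eps (Sact eps (eps α) F) (Sact eps (eps α) (F ∪ {α})) =
      Pi.single (eps α) 1 - Pi.single (eps α) (A (eps α) (eps α)) := by
  have hno : ¬ ∃ b ∈ F, eps b = eps α ∧ ∀ x ∈ F, ¬ b < x := by
    rintro ⟨b, hb, hbα, hbmax⟩
    have hlt : b < α := ((hE.le_total_of_eps_eq hbα).resolve_right fun h => hαF (hF hb h)).lt_of_ne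
      fun h => hαF (h ▸ hb)
    exact hE.not_covBy_of_eps_eq hbα (covBy_of_maximal_of_minimal hbmax hαmin hlt)
  rw [Sact_eq_union hE hF hno hαF rfl hαmin,
    Sact_eq_diff hE ((isIdeal_union_singleton_iff hF).2 hαmin) (Or.inr rfl) rfl
      (hF.not_lt_of_mem_union_singleton hαF),
    Set.union_sdiff_cancel_right (by simpa using hαF), chiFn_swap, chiFn_union_singleton hαF, hA.1,
    show (2 : ℤ) = 1 + 1 by norm_num, Pi.single_add]
  abel

theorem chiFn_Sact_union_singleton_of_adj (hA : IsGCM A) (hE : IsFullHeap A eps)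
    (hF : IsIdeal F) (hαF : α ∉ F) (hαmin : ∀ y < α, y ∈ F) {p : P} (hpα : p ≠ eps α)
    (hApα : A p (eps α) ≠ 0) :
    chiFn eps (Sact eps p F) (Sact eps p (F ∪ {α})) =
      Pi.single (eps α) 1 - Pi.single p (A p (eps α)) := by
  classical
  obtain ⟨β, γ, h, hβα, hαγ⟩ := IsConsecutive.exists_of_adj hE ⟨hpα, hApα⟩
  have hβF : β ∈ F := hαmin β hβα
  have hγF : γ ∉ F := fun hγ => hαF (hF hγ hαγ.le)
  have hγF' : γ ∉ F ∪ {α} := fun hγ => hγF (hγ.resolve_right hαγ.ne')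
  rw [Sact_eq_ite_of_isConsecutive_left hE hF h hβF hαF hαγ,
    Sact_eq_ite_of_isConsecutive_right hE ((isIdeal_union_singleton_iff hF).2 hαmin) h hγF'
      (Or.inr rfl) hβα, ← neg_neg (A p (eps α)), Pi.single_neg, sub_neg_eq_add,
    ← ite_add_ite_eq_neg_of_isConsecutive hA hE hF hαF hαmin hApα h hβα hαγ]
  have hαβ := hβα.ne'
  have hαγ' := hαγ.ne
  have hβγ := h.lt.ne
  split_ifs with hβmax hγmin hγmin
  · rw [show F ∪ {α} ∪ {γ} = F \ {β} ∪ ↑({α, β, γ} : Finset E) by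
        ext x; by_cases hx : x = β <;> simp [hx, hβF, or_left_comm],
      chiFn_union_finset (by simp [hαF, hγF]), Finset.sum_insert (by simp [hαβ, hαγ']),
      Finset.sum_pair hβγ, h.eps_left, h.eps_right, Pi.single_add]
  · rw [show F ∪ {α} = F \ {β} ∪ ↑({α, β} : Finset E) by
        ext x; by_cases hx : x = β <;> simp [hx, hβF],
      chiFn_union_finset (by simp [hαF]), Finset.sum_pair hαβ, h.eps_left, add_zero]
  · rw [show F ∪ {α} ∪ {γ} = F ∪ ↑({α, γ} : Finset E) by ext x; simp [or_left_comm],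
      chiFn_union_finset (by simp [hαF, hγF]), Finset.sum_pair hαγ', h.eps_right, zero_add]
  · rw [chiFn_union_singleton hαF, add_zero, Pi.single_zero, add_zero]

end UnionSingleton

theorem chiFn_Sact_union_singleton {P E : Type*} [Fintype P] [DecidableEq P] [PartialOrder E]
    [LocallyFiniteOrder E] {A : P → P → ℤ} {eps : E → P} (hA : IsGCM A)
    (hE : IsFullHeap A eps) {F : Set E} {α : E} (hF : IsIdeal F) (hαF : α ∉ F)
    (hF' : IsIdeal (F ∪ {α})) (p : P) :
    chiFn eps (Sact eps p F) (Sact eps p (F ∪ {α})) = reflAct A p (Pi.single (eps α) 1) := by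
  have hαmin := (isIdeal_union_singleton_iff hF).1 hF'
  rw [reflAct_single]
  rcases eq_or_ne p (eps α) with rfl | hpα
  · exact chiFn_Sact_union_singleton_self hA hE hF hαF hαmin
  by_cases hA0 : A p (eps α) = 0
  · have hcov (δ : E) (hδ : eps δ = p) : ¬ δ ⋖ α ∧ ¬ α ⋖ δ :=
      hE.not_covBy_of_not_adj hA (hδ ▸ hpα) (hδ ▸ hA0)
    rw [Sact_union_singleton_of_forall_not_covBy hE hF hαF hαmin hpα hcov,
      chiFn_union_singleton fun h => hαF ((mem_Sact_iff_of_eps_ne hpα.symm).1 h), hA0,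
      Pi.single_zero, sub_zero]
  · exact chiFn_Sact_union_singleton_of_adj hA hE hF hαF hαmin hpα hA0

/-- If `chi(F, F') = ± e_q`, then for every vertex `p`,
`chi(S_p(F), S_p(F')) = s_p(chi(F, F'))` where `s_p` acts via the reflection
representation on `ℤ^P`. -/
theorem stmt3 {P E : Type*} [Fintype P] [DecidableEq P] [PartialOrder E]
    [LocallyFiniteOrder E] {A : P → P → ℤ} {eps : E → P}
    (hA : IsGCM A) (hE : IsFullHeap A eps)
    {F F' : Set E} (hF : IsProperIdeal eps F) (hF' : IsProperIdeal eps F') (q : P)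
    (hchi : chiFn eps F F' = Pi.single q 1 ∨ chiFn eps F F' = -Pi.single q 1) :
    ∀ p : P, chiFn eps (Sact eps p F) (Sact eps p F') = reflAct A p (chiFn eps F F') := by
  intro p
  rcases hchi with h | h
  · obtain ⟨α, hαF, rfl, rfl⟩ := hE.exists_eq_union_singleton hF hF' h
    rw [h]
    exact chiFn_Sact_union_singleton hA hE hF.1 hαF hF'.1 p
  · obtain ⟨α, hαF', rfl, rfl⟩ :=
      hE.exists_eq_union_singleton hF' hF (by rw [chiFn_swap, h, neg_neg])
    rw [h, chiFn_swap, chiFn_Sact_union_singleton hA hE hF'.1 hαF' hF.1 p, reflAct_neg]
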